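/- Let a > 0, λ ≥ 0, and let f : [0,∞) → ℝ be defined by f(r) = (1/2)·∫₀^r exp((a s⁴ − 2λ s²)/8)·(∫_s^∞ exp(−(a σ⁴ − 2λ σ²)/8) dσ) ds. Then f'(r) > 0 for every r ≥ 0 and f''(r) < 0 for every r ≥ 0; in particular f' is a strictly decreasing positive function on [0,∞). -/

import Mathlib

/-!
Write `P s = (a s⁴ - 2λ s²)/8`, so that `f' = m/2` for the Mills-type ratio
`m s = exp (P s) ∫ₛ^∞ exp (-P)`. This ratio is positive and satisfies `m' = P' m - 1`, so
`f'' < 0` amounts to `P'(r) m(r) < 1`. That is trivial where `P'(r) ≤ 0`; where `P'(r) > 0`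
(and `r ≥ 0`), `P'` is increasing on `[r, ∞)`, hence
`P'(r) ∫ᵣ^∞ exp (-P) < ∫ᵣ^∞ P' exp (-P) = exp (-P r)`.
-/

open MeasureTheory Filter Set Real Topology

theorem hasDerivAt_setIntegral_Ioi {h : ℝ → ℝ} (hc : Continuous h) (hi : Integrable h)
    (s : ℝ) :
    HasDerivAt (fun t => ∫ σ in Ioi t, h σ) (-h s) s := by
  have hsplit : ∀ t, ∫ σ in Ioi t, h σ = (∫ σ in Ioi s, h σ) - ∫ σ in s..t, h σ :=
    fun t =>
      eq_sub_of_add_eq' (intervalIntegral.integral_interval_add_Ioi hi.integrableOn hi.integrableOn)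
  exact ((hc.integral_hasStrictDerivAt s s).hasDerivAt.const_sub _).congr_of_eventuallyEq
    (Eventually.of_forall hsplit)

noncomputable def millsRatio (P : ℝ → ℝ) (s : ℝ) : ℝ :=
  exp (P s) * ∫ σ in Ioi s, exp (-P σ)

section MillsRatio

variable {P p : ℝ → ℝ}

theorem millsRatio_pos {s : ℝ} (hi : IntegrableOn (fun σ => exp (-P σ)) (Ioi s)) :
    0 < millsRatio P s :=
  have : NeZero (volume.restrict (Ioi s)) := ⟨by simp [Measure.restrict_eq_zero]⟩
  mul_pos (exp_pos _) (integral_exp_pos hi)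

theorem hasDerivAt_millsRatio (hP : ∀ σ, HasDerivAt P (p σ) σ)
    (hi : Integrable fun σ => exp (-P σ)) (s : ℝ) :
    HasDerivAt (millsRatio P) (p s * millsRatio P s - 1) s := by
  have hc : Continuous fun σ => exp (-P σ) :=
    (continuous_iff_continuousAt.2 fun σ => (hP σ).continuousAt).neg.rexp
  refine ((hP s).exp.mul (hasDerivAt_setIntegral_Ioi hc hi s)).congr_deriv ?_
  rw [millsRatio, mul_neg, ← exp_add, add_neg_cancel, exp_zero]
  ring

theorem mul_setIntegral_exp_neg_lt {r : ℝ} (hP : ∀ σ ∈ Ici r, HasDerivAt P (p σ) σ)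
    (hlim : Tendsto P atTop atTop) (hi : IntegrableOn (fun σ => exp (-P σ)) (Ioi r))
    (hr : 0 ≤ p r) (hp : ∀ σ ∈ Ioi r, p r < p σ) :
    p r * ∫ σ in Ioi r, exp (-P σ) < exp (-P r) := by
  have hderiv : ∀ σ ∈ Ici r, HasDerivAt (fun σ => -exp (-P σ)) (p σ * exp (-P σ)) σ :=
    fun σ hσ => (hP σ hσ).neg.exp.neg.congr_deriv <| by
      rw [Pi.neg_apply, mul_neg, neg_neg, mul_comm]
  have hnonneg : ∀ σ ∈ Ioi r, 0 ≤ p σ * exp (-P σ) := fun σ hσ =>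
    mul_nonneg (hr.trans (hp σ hσ).le) (exp_pos _).le
  have htendsto : Tendsto (fun σ => -exp (-P σ)) atTop (𝓝 0) := by
    simpa using (tendsto_exp_neg_atTop_nhds_zero.comp hlim).neg
  have hFTC : ∫ σ in Ioi r, p σ * exp (-P σ) = exp (-P r) := by
    rw [integral_Ioi_of_hasDerivAt_of_nonneg' hderiv hnonneg htendsto, zero_sub, neg_neg]
  have hpi := integrableOn_Ioi_deriv_of_nonneg' hderiv hnonneg htendsto
  have hdi : IntegrableOn (fun σ => p σ * exp (-P σ) - p r * exp (-P σ)) (Ioi r) :=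
    hpi.sub (hi.const_mul _)
  have hgap : 0 < ∫ σ in Ioi r, (p σ * exp (-P σ) - p r * exp (-P σ)) := by
    have hsupp : Ioi r ⊆ Function.support fun σ => p σ * exp (-P σ) - p r * exp (-P σ) :=
      fun σ hσ => by
        rw [Function.mem_support, ← sub_mul]
        exact (mul_pos (sub_pos.2 (hp σ hσ)) (exp_pos _)).ne'
    rw [setIntegral_pos_iff_support_of_nonneg_ae _ hdi,
      inter_eq_right.2 hsupp, volume_Ioi]
    · exact ENNReal.zero_lt_top
    · filter_upwards [ae_restrict_mem measurableSet_Ioi] with σ hσ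
      rw [Pi.zero_apply, ← sub_mul]
      exact mul_nonneg (sub_nonneg.2 (hp σ hσ).le) (exp_pos _).le
  rw [integral_sub hpi (hi.const_mul _), integral_const_mul, hFTC] at hgap
  linarith

theorem mul_millsRatio_lt_one {r : ℝ} (hP : ∀ σ ∈ Ici r, HasDerivAt P (p σ) σ)
    (hlim : Tendsto P atTop atTop) (hi : IntegrableOn (fun σ => exp (-P σ)) (Ioi r))
    (hr : 0 ≤ p r) (hp : ∀ σ ∈ Ioi r, p r < p σ) :
    p r * millsRatio P r < 1 := by
  calc p r * millsRatio P r = exp (P r) * (p r * ∫ σ in Ioi r, exp (-P σ)) := by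
        rw [millsRatio]; ring
    _ < exp (P r) * exp (-P r) :=
        mul_lt_mul_of_pos_left (mul_setIntegral_exp_neg_lt hP hlim hi hr hp) (exp_pos _)
    _ = 1 := by rw [← exp_add, add_neg_cancel, exp_zero]

end MillsRatio

noncomputable def quarticPotential (a lam s : ℝ) : ℝ :=
  (a * s ^ 4 - 2 * lam * s ^ 2) / 8

section QuarticPotential

variable {a lam : ℝ}

theorem hasDerivAt_quarticPotential (s : ℝ) :
    HasDerivAt (quarticPotential a lam) ((a * s ^ 3 - lam * s) / 2) s := by
  refine ((((hasDerivAt_pow 4 s).const_mul a).sub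
    ((hasDerivAt_pow 2 s).const_mul (2 * lam))).div_const 8).congr_deriv ?_
  push_cast
  ring

theorem tendsto_quarticPotential_atTop (ha : 0 < a) :
    Tendsto (quarticPotential a lam) atTop atTop := by
  have hsq : Tendsto (fun σ : ℝ => σ ^ 2) atTop atTop := tendsto_pow_atTop two_ne_zero
  have hprod := hsq.atTop_mul_atTop₀ (tendsto_atTop_add_const_right _ (-(2 * lam))
    (hsq.const_mul_atTop ha))
  exact (hprod.atTop_div_const (by norm_num : (0 : ℝ) < 8)).congr fun σ => by
    rw [quarticPotential]; ring

theorem integrable_exp_neg_quarticPotential (ha : 0 < a) :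
    Integrable fun σ => exp (-quarticPotential a lam σ) := by
  -- `-P σ + σ² = (λ/4 + 1) σ² - a σ⁴/8` is bounded by completing the square in `σ²`
  have hbound : ∀ σ : ℝ,
      -quarticPotential a lam σ ≤ 2 * (lam / 4 + 1) ^ 2 / a + -1 * σ ^ 2 := fun σ => by
    have : (lam / 4 + 1) * σ ^ 2 - a * σ ^ 4 / 8 ≤ 2 * (lam / 4 + 1) ^ 2 / a := by
      rw [le_div_iff₀ ha]
      nlinarith [sq_nonneg (a * σ ^ 2 - 4 * (lam / 4 + 1))]
    rw [quarticPotential]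
    linarith
  refine ((integrable_exp_neg_mul_sq one_pos).const_mul (exp (2 * (lam / 4 + 1) ^ 2 / a))).mono'
    (by unfold quarticPotential; fun_prop) (Eventually.of_forall fun σ => ?_)
  rw [norm_of_nonneg (exp_pos _).le, ← exp_add]
  exact exp_le_exp.2 (hbound σ)

theorem quarticPotential_deriv_lt (ha : 0 < a) {r σ : ℝ} (hr : 0 ≤ r)
    (hpos : 0 < (a * r ^ 3 - lam * r) / 2) (hrσ : r < σ) :
    (a * r ^ 3 - lam * r) / 2 < (a * σ ^ 3 - lam * σ) / 2 := by
  have hr0 : 0 < r := hr.lt_of_ne (by rintro rfl; norm_num at hpos)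
  have hlam : lam < a * r ^ 2 := by nlinarith
  have hfactor : 0 < a * (σ ^ 2 + σ * r + r ^ 2) - lam := by
    nlinarith [mul_pos ha (mul_pos (hr0.trans hrσ) (by linarith : 0 < σ + r))]
  nlinarith [mul_pos (sub_pos.2 hrσ) hfactor]

theorem quarticPotential_deriv_mul_millsRatio_lt_one (ha : 0 < a) {r : ℝ} (hr : 0 ≤ r) :
    (a * r ^ 3 - lam * r) / 2 * millsRatio (quarticPotential a lam) r < 1 := by
  have hi := integrable_exp_neg_quarticPotential (lam := lam) ha
  rcases le_or_gt ((a * r ^ 3 - lam * r) / 2) 0 with hneg | hpos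
  · nlinarith [millsRatio_pos hi.integrableOn (s := r)]
  · exact mul_millsRatio_lt_one (fun σ _ => hasDerivAt_quarticPotential σ)
      (tendsto_quarticPotential_atTop ha) hi.integrableOn hpos.le
      fun σ hσ => quarticPotential_deriv_lt ha hr hpos hσ

end QuarticPotential

theorem stmt3_general (a lam : ℝ) (ha : 0 < a) (f : ℝ → ℝ)
    (hf : ∀ r : ℝ, f r = (1 / 2) * ∫ s in (0:ℝ)..r,
      Real.exp ((a * s ^ 4 - 2 * lam * s ^ 2) / 8) *
        ∫ σ in Set.Ioi s, Real.exp (-((a * σ ^ 4 - 2 * lam * σ ^ 2) / 8))) :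
    (∀ r : ℝ, 0 ≤ r → 0 < deriv f r) ∧
    (∀ r : ℝ, 0 ≤ r → deriv (deriv f) r < 0) ∧
    StrictAntiOn (deriv f) (Set.Ici 0) := by
  set m := millsRatio (quarticPotential a lam)
  have hi := integrable_exp_neg_quarticPotential (lam := lam) ha
  have hm : ∀ s, HasDerivAt m ((a * s ^ 3 - lam * s) / 2 * m s - 1) s :=
    hasDerivAt_millsRatio hasDerivAt_quarticPotential hi
  have hmc : Continuous m := continuous_iff_continuousAt.2 fun s => (hm s).continuousAt
  have hf' : deriv f = fun r => 1 / 2 * m r := by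
    rw [show f = fun r => 1 / 2 * ∫ s in (0:ℝ)..r, m s from funext hf]
    exact funext fun r => ((hmc.integral_hasStrictDerivAt 0 r).hasDerivAt.const_mul _).deriv
  have hf'' : ∀ r, 0 ≤ r → deriv (deriv f) r < 0 := fun r hr => by
    rw [hf', ((hm r).const_mul _).deriv]
    linarith [quarticPotential_deriv_mul_millsRatio_lt_one (lam := lam) ha hr]
  refine ⟨fun r _ => ?_, hf'', strictAntiOn_of_deriv_neg (convex_Ici 0) ?_ fun r hr => ?_⟩
  · rw [hf']
    exact mul_pos one_half_pos (millsRatio_pos hi.integrableOn)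
  · exact hf' ▸ (continuous_const.mul hmc).continuousOn
  · exact hf'' r (interior_subset hr)

/-- For `a > 0`, `λ ≥ 0`, and
`f r = (1/2) ∫₀^r exp((a s⁴ − 2λ s²)/8) (∫_s^∞ exp(−(a σ⁴ − 2λ σ²)/8) dσ) ds`,
one has `f'(r) > 0` and `f''(r) < 0` for every `r ≥ 0`; in particular `f'` is a strictly
decreasing positive function on `[0,∞)`. -/
theorem stmt3 (a lam : ℝ) (ha : 0 < a) (hlam : 0 ≤ lam) (f : ℝ → ℝ)
    (hf : ∀ r : ℝ, f r = (1 / 2) * ∫ s in (0:ℝ)..r,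
      Real.exp ((a * s ^ 4 - 2 * lam * s ^ 2) / 8) *
        ∫ σ in Set.Ioi s, Real.exp (-((a * σ ^ 4 - 2 * lam * σ ^ 2) / 8))) :
    (∀ r : ℝ, 0 ≤ r → 0 < deriv f r) ∧
    (∀ r : ℝ, 0 ≤ r → deriv (deriv f) r < 0) ∧
    StrictAntiOn (deriv f) (Set.Ici 0) :=
  stmt3_general a lam ha f hf
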